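/- arXiv:2406.13546 — 2 statements merged into one kernel-verified Lean document; each statement's English description precedes it below -/
import Mathlib

section
/- Let W be a Weyl group, S, T ⊆ Φ, and let W_{S,T} denote the set of minimal length double coset representatives in W(S)\W/W(T). The map Ω : W_{S,T} → W_{S,θ(T)} sending u to the minimal length representative of W(S)·u·w_{o,T}·W(θ(T)) is a bijection that reverses the Bruhat order: u ≤ u' implies Ω(u) ≥ Ω(u'). -/
/-- Bruhat order: `v ≤ w` iff some reduced word for `w` has a subword whose product is `v`. -/
def BruhatLE {B W : Type*} [Group W] {M : CoxeterMatrix B} (cs : CoxeterSystem M W)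
    (v w : W) : Prop :=
  ∃ l : List B, cs.IsReduced l ∧ cs.wordProd l = w ∧
    ∃ l' : List B, l'.Sublist l ∧ cs.wordProd l' = v

/-- The standard parabolic subgroup `W(S)` generated by the simple reflections in `S`. -/
def WPar {B W : Type*} [Group W] {M : CoxeterMatrix B} (cs : CoxeterSystem M W)
    (S : Set B) : Subgroup W :=
  Subgroup.closure (cs.simple '' S)

/-- `r` is a minimal length representative of the double coset `W(S)·w·W(T)`. -/
def IsMinDoubleCosetRep {B W : Type*} [Group W] {M : CoxeterMatrix B} (cs : CoxeterSystem M W)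
    (S T : Set B) (w r : W) : Prop :=
  (∃ x ∈ WPar cs S, ∃ y ∈ WPar cs T, r = x * w * y) ∧
    ∀ v : W, (∃ x ∈ WPar cs S, ∃ y ∈ WPar cs T, v = x * w * y) →
      cs.length r ≤ cs.length v

/-- `W_{S,T}`, the set of minimal length double coset representatives in `W(S)\W/W(T)`. -/
def WST {B W : Type*} [Group W] {M : CoxeterMatrix B} (cs : CoxeterSystem M W)
    (S T : Set B) : Set W :=
  {u | IsMinDoubleCosetRep cs S T u u}

/-!
Put `M(u) = Ω(u) * w_o`. Conjugation by `w_o` carries `W(T)` onto `W(θ(T))` and right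
multiplication by `w_o` turns lengths into `ℓ(w_o) - ℓ(·)`, so `W(S)·u·w_{o,T}·W(θ(T))` is
`W(S)·u·W(T)·w_o` and `M(u)` is a longest element of `W(S)·u·W(T)`. In the Bruhat order the
minimal representative `u` lies below, and the longest element `M(u)` above, every element of
this double coset; this makes both unique and gives the bijection. If `u ≤ u'`, then
`u ≤ u' ≤ M(u')`, hence every element of `W(S)·u·W(T)`, in particular `M(u)`, lies below
`M(u')`; right multiplication by `w_o` reverses the Bruhat order, so `Ω(u') ≤ Ω(u)`.

The Bruhat order is used in its chain form (right multiplications by length-increasing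
reflections). Its subword description, the lifting property and the strong exchange condition
behind them come from Tits' parity cocycle: `s` acting on `W × ZMod 2` by
`(x, e) ↦ (s x s, e + [x = s])` satisfies the Coxeter relations, so the parity of the number of
occurrences of a reflection in the right inversion sequence of a word depends only on the
product of the word.
-/

theorem inv_pow_mul_pow_of_mul_self {G : Type*} [Group G] {a b : G} (ha : a * a = 1)
    (hb : b * b = 1) (n k : ℕ) :
    ((a * b) ^ n)⁻¹ * ((b * a) ^ k * b) * (a * b) ^ n = (b * a) ^ (2 * n + k) * b := by
  have hinv : ((a * b) ^ n)⁻¹ = (b * a) ^ n := by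
    rw [← inv_pow, mul_inv_rev, inv_eq_of_mul_eq_one_right ha, inv_eq_of_mul_eq_one_right hb]
  have hsemi : b * (a * b) ^ n = (b * a) ^ n * b :=
    ((show SemiconjBy b (a * b) (b * a) from (mul_assoc b a b).symm).pow_right n).eq
  rw [hinv, mul_assoc, mul_assoc, hsemi, ← mul_assoc, ← mul_assoc, ← pow_add, ← pow_add,
    two_mul, add_right_comm]

theorem mul_mul_inv_eq_iff {G : Type*} [Group G] {g x t : G} :
    g * x * g⁻¹ = t ↔ x = g⁻¹ * t * g := by
  constructor <;> rintro rfl <;> group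

theorem mem_doubleCoset_mul_map_conj_iff {G : Type*} [Group G] {H K : Subgroup G} {a g v : G} :
    v ∈ DoubleCoset.doubleCoset (a * g) H (K.map (MulAut.conj g⁻¹).toMonoidHom) ↔
      v * g⁻¹ ∈ DoubleCoset.doubleCoset a H K := by
  simp only [DoubleCoset.mem_doubleCoset, SetLike.mem_coe, Subgroup.mem_map,
    MulEquiv.coe_toMonoidHom, MulAut.conj_apply, inv_inv]
  constructor
  · rintro ⟨x, hx, _, ⟨y, hy, rfl⟩, rfl⟩
    exact ⟨x, hx, y, hy, by group⟩
  · rintro ⟨x, hx, y, hy, h⟩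
    rw [mul_inv_eq_iff_eq_mul] at h
    exact ⟨x, hx, _, ⟨y, hy, rfl⟩, by rw [h]; group⟩

open List in
theorem List.sublist_append_singleton_cases {α : Type*} {l r : List α} {a : α}
    (h : l <+ r ++ [a]) : l <+ r ∨ ∃ l', l = l' ++ [a] ∧ l' <+ r := by
  obtain ⟨l₁, l₂, rfl, h₁, h₂⟩ := List.sublist_append_iff.mp h
  rcases List.sublist_singleton.mp h₂ with rfl | rfl
  · exact Or.inl (by simpa using h₁)
  · exact Or.inr ⟨l₁, rfl, h₁⟩

namespace CoxeterSystem

open List DoubleCoset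

variable {B W : Type*} [Group W] {M : CoxeterMatrix B} (cs : CoxeterSystem M W)

local prefix:100 "s" => cs.simple
local prefix:100 "π" => cs.wordProd
local prefix:100 "ℓ" => cs.length
local prefix:100 "ris" => cs.rightInvSeq

section ReflectionCocycle

variable [DecidableEq W]

def simpleInvolution (i : B) (p : W × ZMod 2) : W × ZMod 2 :=
  (s i * p.1 * s i, p.2 + if p.1 = s i then 1 else 0)

theorem simpleInvolution_involutive (i : B) : Function.Involutive (cs.simpleInvolution i) := by
  rintro ⟨x, e⟩
  have hconj : s i * x * s i = s i ↔ x = s i := by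
    rw [mul_eq_right, mul_eq_one_iff_inv_eq, inv_simple, eq_comm]
  simp only [simpleInvolution, hconj, add_assoc, CharTwo.add_self_eq_zero, add_zero]
  simp [mul_assoc]

def simplePerm (i : B) : Equiv.Perm (W × ZMod 2) :=
  (cs.simpleInvolution_involutive i).toPerm

theorem simplePerm_mul_pow_apply (i j : B) (n : ℕ) (x : W) (e : ZMod 2) :
    ((cs.simplePerm i * cs.simplePerm j) ^ n) (x, e) =
      ((s i * s j) ^ n * x * ((s i * s j) ^ n)⁻¹,
        e + ∑ k ∈ Finset.range (2 * n), if x = (s j * s i) ^ k * s j then 1 else 0) := by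
  induction n with
  | zero => simp
  | succ n ih =>
    have hi := cs.simple_mul_simple_self i
    have hj := cs.simple_mul_simple_self j
    rw [pow_succ', Equiv.Perm.mul_apply, ih]
    simp only [Equiv.Perm.mul_apply, simplePerm, Function.Involutive.coe_toPerm,
      simpleInvolution, Prod.mk.injEq]
    constructor
    · simp only [pow_succ', mul_inv_rev, inv_simple]
      group
    have hsj : ∀ y, s j * y * s j = s i ↔ y = s j * s i * s j := fun y => by
      simpa only [inv_simple] using mul_mul_inv_eq_iff (g := s j) (x := y) (t := s i)
    have hsecond : s j * ((s i * s j) ^ n * x * ((s i * s j) ^ n)⁻¹) * s j = s i ↔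
        x = (s j * s i) ^ (2 * n + 1) * s j := by
      rw [hsj, mul_mul_inv_eq_iff, ← inv_pow_mul_pow_of_mul_self hi hj n 1, pow_one]
    have hfirst : (s i * s j) ^ n * x * ((s i * s j) ^ n)⁻¹ = s j ↔
        x = (s j * s i) ^ (2 * n) * s j := by
      have h₀ := inv_pow_mul_pow_of_mul_self hi hj n 0
      rw [pow_zero, one_mul, add_zero] at h₀
      rw [← h₀, mul_mul_inv_eq_iff]
    simp only [hfirst, hsecond]
    rw [mul_add_one, Finset.sum_range_succ, Finset.sum_range_succ]
    abel

theorem isLiftable_simplePerm : M.IsLiftable cs.simplePerm := by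
  intro i j
  ext ⟨x, e⟩ : 1
  have hperiod : ∀ k, (s j * s i) ^ (M i j + k) = (s j * s i) ^ k := fun k => by
    rw [pow_add, simple_mul_simple_pow', one_mul]
  rw [simplePerm_mul_pow_apply, simple_mul_simple_pow, two_mul, Finset.sum_range_add]
  simp [hperiod, CharTwo.add_self_eq_zero]

def reflectionRep : W →* Equiv.Perm (W × ZMod 2) :=
  cs.lift ⟨cs.simplePerm, cs.isLiftable_simplePerm⟩

theorem reflectionRep_wordProd (ω : List B) (x : W) (e : ZMod 2) :
    cs.reflectionRep (π ω) (x, e) = (π ω * x * (π ω)⁻¹, e + (ris ω).count x) := by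
  induction ω generalizing e with
  | nil => simp
  | cons i ω ih =>
    rw [wordProd_cons, map_mul, Equiv.Perm.mul_apply, ih, reflectionRep, lift_apply_simple]
    simp only [simplePerm, Function.Involutive.coe_toPerm, simpleInvolution, Prod.mk.injEq,
      rightInvSeq, List.count_cons, mul_mul_inv_eq_iff, beq_iff_eq, eq_comm (b := x)]
    constructor
    · simp only [mul_inv_rev, inv_simple]
      group
    · push_cast
      ring

def reflCocycle (w x : W) : ZMod 2 := (cs.reflectionRep w (x, 0)).2

theorem reflCocycle_wordProd (ω : List B) (x : W) :
    cs.reflCocycle (π ω) x = (ris ω).count x := by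
  rw [reflCocycle, reflectionRep_wordProd, zero_add]

theorem reflectionRep_apply (w x : W) (e : ZMod 2) :
    cs.reflectionRep w (x, e) = (w * x * w⁻¹, e + cs.reflCocycle w x) := by
  obtain ⟨ω, rfl⟩ := cs.wordProd_surjective w
  rw [reflectionRep_wordProd, reflCocycle_wordProd]

theorem reflCocycle_mul (a b x : W) :
    cs.reflCocycle (a * b) x = cs.reflCocycle b x + cs.reflCocycle a (b * x * b⁻¹) := by
  rw [reflCocycle, map_mul, Equiv.Perm.mul_apply, reflectionRep_apply, reflectionRep_apply,
    zero_add]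

theorem reflCocycle_one (x : W) : cs.reflCocycle 1 x = 0 := by
  simpa using cs.reflCocycle_wordProd [] x

theorem reflCocycle_simple_self (i : B) : cs.reflCocycle (s i) (s i) = 1 := by
  simpa using cs.reflCocycle_wordProd [i] (s i)

variable {cs}

theorem IsReflection.reflCocycle_self {t : W} (ht : cs.IsReflection t) :
    cs.reflCocycle t t = 1 := by
  obtain ⟨u, i, rfl⟩ := ht
  have hconj : u⁻¹ * (u * s i * u⁻¹) * u = s i := by group
  have hu := cs.reflCocycle_mul u u⁻¹ (u * s i * u⁻¹)
  have hus := cs.reflCocycle_mul (u * s i) u⁻¹ (u * s i * u⁻¹)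
  have hsi := cs.reflCocycle_mul u (s i) (s i)
  rw [mul_inv_cancel, reflCocycle_one, inv_inv, hconj] at hu
  rw [inv_inv, hconj] at hus
  rw [mul_inv_cancel_right, reflCocycle_simple_self] at hsi
  linear_combination hus + hsi - hu

theorem IsRightInversion.reflCocycle_eq_one {w t : W} (h : cs.IsRightInversion w t) :
    cs.reflCocycle w t = 1 := by
  obtain ⟨ht, hlt⟩ := h
  have hwt : cs.reflCocycle (w * t) t = 0 := by
    obtain ⟨ω, hω, hωw⟩ := cs.exists_isReduced (w * t)
    by_contra hne
    have hmem : t ∈ ris ω := by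
      rw [← List.count_pos_iff, Nat.pos_iff_ne_zero]
      intro hzero
      rw [hωw, reflCocycle_wordProd, hzero, Nat.cast_zero] at hne
      exact hne rfl
    have := (cs.isRightInversion_of_mem_rightInvSeq hω hmem).2
    rw [← hωw, mul_assoc, ht.mul_self, mul_one] at this
    exact lt_asymm hlt this
  have := cs.reflCocycle_mul (w * t) t t
  rwa [mul_assoc, ht.mul_self, mul_one, ht.inv, one_mul, ht.reflCocycle_self, hwt,
    add_zero] at this

theorem IsRightInversion.mem_rightInvSeq {ω : List B} {t : W}
    (h : cs.IsRightInversion (π ω) t) : t ∈ ris ω := by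
  rw [← List.count_pos_iff, Nat.pos_iff_ne_zero]
  intro hzero
  have := h.reflCocycle_eq_one
  rw [reflCocycle_wordProd, hzero, Nat.cast_zero] at this
  exact zero_ne_one this

end ReflectionCocycle

variable {cs} in
theorem IsRightInversion.exists_wordProd_eraseIdx {ω : List B} {t : W}
    (h : cs.IsRightInversion (π ω) t) : ∃ j < ω.length, π (ω.eraseIdx j) = π ω * t := by
  classical
  obtain ⟨j, hj, rfl⟩ := List.mem_iff_getElem.mp h.mem_rightInvSeq
  rw [length_rightInvSeq] at hj
  refine ⟨j, hj, ?_⟩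
  rw [← wordProd_mul_getD_rightInvSeq, List.getD_eq_getElem]

def BruhatStep (v w : W) : Prop := ∃ t, cs.IsReflection t ∧ w = v * t ∧ ℓ v < ℓ w

def ChainLE (v w : W) : Prop := Relation.ReflTransGen cs.BruhatStep v w

namespace ChainLE

variable {cs} {u v w : W}

@[refl] theorem refl (w : W) : cs.ChainLE w w := Relation.ReflTransGen.refl

theorem trans (h₁ : cs.ChainLE u v) (h₂ : cs.ChainLE v w) : cs.ChainLE u w :=
  Relation.ReflTransGen.trans h₁ h₂

theorem length_le (h : cs.ChainLE v w) : ℓ v ≤ ℓ w := by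
  induction h with
  | refl => rfl
  | tail _ hstep ih =>
    obtain ⟨t, -, rfl, hlt⟩ := hstep
    exact ih.trans hlt.le

theorem eq_of_length_le (h : cs.ChainLE v w) (hlen : ℓ w ≤ ℓ v) : v = w := by
  rcases Relation.ReflTransGen.cases_tail h with rfl | ⟨x, hvx, t, -, rfl, hlt⟩
  · rfl
  · exact absurd ((length_le hvx).trans_lt hlt) hlen.not_gt

theorem inv (h : cs.ChainLE v w) : cs.ChainLE v⁻¹ w⁻¹ := by
  induction h with
  | refl => rfl
  | @tail x _ _ hstep ih =>
    obtain ⟨t, ht, rfl, hlt⟩ := hstep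
    refine ih.tail ⟨x * t * x⁻¹, ht.conj x, ?_, ?_⟩
    · rw [mul_inv_rev, ht.inv]
      group
    · rwa [length_inv, length_inv]

end ChainLE

theorem chainLE_mul_of_length_lt {w t : W} (ht : cs.IsReflection t) (hlt : ℓ w < ℓ (w * t)) :
    cs.ChainLE w (w * t) :=
  Relation.ReflTransGen.single ⟨t, ht, rfl, hlt⟩

theorem chainLE_mul_simple {w : W} {i : B} (h : ¬cs.IsRightDescent w i) :
    cs.ChainLE w (w * s i) :=
  cs.chainLE_mul_of_length_lt (cs.isReflection_simple i)
    (by rw [cs.not_isRightDescent_iff.mp h]; exact lt_add_one _)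

theorem mul_simple_chainLE {w : W} {i : B} (h : cs.IsRightDescent w i) :
    cs.ChainLE (w * s i) w := by
  simpa using cs.chainLE_mul_simple (w := w * s i) (i := i) (by simpa [IsRightDescent] using h.le)

section Lifting

variable {cs}

-- Strong exchange deletes one letter of the word `ρ ++ [i]` for `x * t`; deleting any letter
-- but the last one would make `x * s i` shorter than `x`.
theorem IsReflection.eq_simple_of_length_mul_eq_succ {x t : W} {i : B}
    (ht : cs.IsReflection t) (hlen : ℓ (x * t) = ℓ x + 1) (hxt : cs.IsRightDescent (x * t) i)
    (hx : ¬cs.IsRightDescent x i) : t = s i := by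
  obtain ⟨ρ, hρ, hρw⟩ := cs.exists_isReduced (x * t * s i)
  have hω : π (ρ ++ [i]) = x * t := by
    rw [wordProd_append, wordProd_singleton, ← hρw, simple_mul_simple_cancel_right]
  have hρlen : ρ.length = ℓ x := by
    have := cs.isRightDescent_iff.mp hxt
    rw [hρw, hρ.eq] at this
    omega
  obtain ⟨j, hj, hωj⟩ := IsRightInversion.exists_wordProd_eraseIdx (ω := ρ ++ [i])
    ⟨ht, by rw [hω, mul_assoc, ht.mul_self, mul_one, hlen]; exact lt_add_one _⟩
  rw [hω, mul_assoc, ht.mul_self, mul_one] at hωj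
  rcases lt_or_ge j ρ.length with hjρ | hjρ
  · rw [List.eraseIdx_append_of_lt_length hjρ, wordProd_append, wordProd_singleton] at hωj
    have hxs : ℓ (x * s i) ≤ ρ.length - 1 := by
      rw [← hωj, simple_mul_simple_cancel_right]
      exact (cs.length_wordProd_le _).trans_eq (List.length_eraseIdx_of_lt hjρ)
    have := cs.not_isRightDescent_iff.mp hx
    omega
  · have hjeq : j = ρ.length := by simp at hj; omega
    rw [hjeq, List.eraseIdx_append_of_length_le le_rfl] at hωj
    simp only [Nat.sub_self, List.eraseIdx_cons_zero, List.append_nil] at hωj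
    rwa [hωj, mul_assoc, mul_eq_left, mul_eq_one_iff_eq_inv, inv_simple] at hρw

theorem ChainLE.mul_simple {v w : W} (h : cs.ChainLE v w) (i : B) :
    (¬cs.IsRightDescent w i → cs.ChainLE (v * s i) (w * s i)) ∧
      (cs.IsRightDescent w i → cs.ChainLE (v * s i) w) := by
  induction h with
  | refl => exact ⟨fun _ => .refl _, cs.mul_simple_chainLE⟩
  | @tail x _ _ hstep ih =>
    obtain ⟨t, ht, rfl, hlt⟩ := hstep
    have hconj : ℓ (x * s i) < ℓ (x * t * s i) → cs.ChainLE (x * s i) (x * t * s i) := by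
      have h := cs.chainLE_mul_of_length_lt (w := x * s i) (by simpa using ht.conj (s i))
      rwa [show x * s i * (s i * t * s i) = x * t * s i by simp [mul_assoc]] at h
    by_cases hx : cs.IsRightDescent x i
    · have hvx := ih.2 hx
      have hxw := cs.chainLE_mul_of_length_lt ht hlt
      exact ⟨fun hw => hvx.trans (hxw.trans (cs.chainLE_mul_simple hw)), fun _ => hvx.trans hxw⟩
    have hvx := ih.1 hx
    have hxs := cs.not_isRightDescent_iff.mp hx
    refine ⟨fun hw => hvx.trans (hconj ?_), fun hw => hvx.trans ?_⟩
    · have := cs.not_isRightDescent_iff.mp hw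
      omega
    have hne : ℓ (x * t * s i) ≠ ℓ (x * s i) := by
      simpa [mul_assoc] using (ht.conj (s i)).length_mul_left_ne (x * s i)
    rcases lt_or_gt_of_ne hne with hgt | hlt'
    · have hwt := cs.isRightDescent_iff.mp hw
      rw [ht.eq_simple_of_length_mul_eq_succ (by omega) hw hx]
    · exact (hconj hlt').trans (cs.mul_simple_chainLE hw)

theorem IsReduced.chainLE_of_sublist {ω ω' : List B} (hω : cs.IsReduced ω) (h : ω' <+ ω) :
    cs.ChainLE (π ω') (π ω) := by
  induction ω using List.reverseRecOn generalizing ω' with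
  | nil => rw [List.sublist_nil.mp h]
  | append_singleton ρ i ih =>
    have hρ : cs.IsReduced ρ := by simpa using hω.take ρ.length
    have hasc : ¬cs.IsRightDescent (π ρ) i := by
      rw [cs.not_isRightDescent_iff, ← wordProd_singleton, ← wordProd_append, hω.eq, hρ.eq,
        List.length_append, List.length_singleton]
    rw [wordProd_append, wordProd_singleton]
    rcases List.sublist_append_singleton_cases h with h' | ⟨ρ', rfl, h'⟩
    · exact (ih hρ h').trans (cs.chainLE_mul_simple hasc)
    · rw [wordProd_append, wordProd_singleton]
      exact ((ih hρ h').mul_simple i).1 hasc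

theorem ChainLE.exists_sublist {v w : W} (h : cs.ChainLE v w) {ω : List B} (hω : π ω = w) :
    ∃ ω', ω' <+ ω ∧ π ω' = v := by
  induction h generalizing ω with
  | refl => exact ⟨ω, .refl ω, hω⟩
  | @tail x _ _ hstep ih =>
    obtain ⟨t, ht, rfl, hlt⟩ := hstep
    obtain ⟨j, -, hj⟩ := IsRightInversion.exists_wordProd_eraseIdx (ω := ω)
      ⟨ht, by rwa [hω, mul_assoc, ht.mul_self, mul_one]⟩
    rw [hω, mul_assoc, ht.mul_self, mul_one] at hj
    obtain ⟨ω', hω', rfl⟩ := ih hj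
    exact ⟨ω', hω'.trans (List.eraseIdx_sublist ω j), rfl⟩

theorem ChainLE.chainLE_mul_simple {v w : W} {i : B} (h : cs.ChainLE v w)
    (hv : ¬cs.IsRightDescent v i) : cs.ChainLE v (w * s i) := by
  obtain ⟨ρ, hρ, hρw⟩ := cs.exists_isReduced (w * s i)
  obtain ⟨ω', h', rfl⟩ := h.exists_sublist (ω := ρ ++ [i])
    (by rw [wordProd_append, wordProd_singleton, ← hρw, simple_mul_simple_cancel_right])
  rw [hρw]
  rcases List.sublist_append_singleton_cases h' with h'' | ⟨ρ', rfl, h''⟩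
  · exact hρ.chainLE_of_sublist h''
  · rw [wordProd_append, wordProd_singleton] at hv ⊢
    have hlt := cs.not_isRightDescent_iff.mp hv
    rw [simple_mul_simple_cancel_right] at hlt
    obtain ⟨j, -, hj⟩ := IsRightInversion.exists_wordProd_eraseIdx (ω := ρ')
      ⟨cs.isReflection_simple i, by omega⟩
    rw [← hj]
    exact hρ.chainLE_of_sublist ((List.eraseIdx_sublist ρ' j).trans h'')

end Lifting

theorem bruhatLE_iff_chainLE {v w : W} : BruhatLE cs v w ↔ cs.ChainLE v w := by
  constructor
  · rintro ⟨ω, hω, rfl, ω', h, rfl⟩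
    exact hω.chainLE_of_sublist h
  · intro h
    obtain ⟨ω, hω, rfl⟩ := cs.exists_isReduced w
    obtain ⟨ω', h', rfl⟩ := h.exists_sublist rfl
    exact ⟨ω, hω, rfl, ω', h', rfl⟩

section Parabolic

variable {S T : Set B}

theorem simple_mem_wpar {i : B} (hi : i ∈ S) : s i ∈ WPar cs S :=
  Subgroup.subset_closure ⟨i, hi, rfl⟩

theorem wpar_induction_right {p : W → Prop} (one : p 1)
    (mul_simple : ∀ x, ∀ i ∈ T, p x → p (x * s i)) {y : W} (hy : y ∈ WPar cs T) :
    p y := by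
  induction hy using Subgroup.closure_induction_right with
  | one => exact one
  | mul_right x _ _ hi ih =>
    obtain ⟨i, hi, rfl⟩ := hi
    exact mul_simple x i hi ih
  | mul_inv_cancel x _ _ hi ih =>
    obtain ⟨i, hi, rfl⟩ := hi
    simpa using mul_simple x i hi ih

theorem wpar_image_eq_map {θ : B → B} {g : W} (hθ : ∀ b, s (θ b) = g⁻¹ * s b * g) :
    WPar cs (θ '' T) = (WPar cs T).map (MulAut.conj g⁻¹).toMonoidHom := by
  rw [WPar, WPar, MonoidHom.map_closure, Set.image_image, Set.image_image]
  simp [hθ]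

theorem simple_mul_mem_doubleCoset {i : B} (hi : i ∈ S) (w : W) :
    s i * w ∈ doubleCoset w (WPar cs S) (WPar cs T) :=
  mem_doubleCoset.mpr ⟨s i, simple_mem_wpar cs hi, 1, one_mem _, by simp⟩

theorem mul_simple_mem_doubleCoset {i : B} (hi : i ∈ T) (w : W) :
    w * s i ∈ doubleCoset w (WPar cs S) (WPar cs T) :=
  mem_doubleCoset.mpr ⟨1, one_mem _, s i, simple_mem_wpar cs hi, by simp⟩

variable {cs}

theorem ChainLE.chainLE_mul_of_mem_wpar {u w y : W} (hu : ∀ i ∈ T, ¬cs.IsRightDescent u i)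
    (h : cs.ChainLE u w) (hy : y ∈ WPar cs T) : cs.ChainLE u (w * y) :=
  wpar_induction_right cs (p := fun y => cs.ChainLE u (w * y)) (by simpa)
    (fun x i hi hx => by simpa [mul_assoc] using hx.chainLE_mul_simple (hu i hi)) hy

theorem ChainLE.chainLE_mul_left_of_mem_wpar {u w x : W} (hu : ∀ i ∈ S, ¬cs.IsLeftDescent u i)
    (h : cs.ChainLE u w) (hx : x ∈ WPar cs S) : cs.ChainLE u (x * w) := by
  have := h.inv.chainLE_mul_of_mem_wpar (fun i hi => by rw [isRightDescent_inv_iff]; exact hu i hi)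
    (inv_mem hx)
  simpa using this.inv

theorem ChainLE.mul_chainLE_of_mem_wpar {c m y : W} (hm : ∀ i ∈ T, cs.IsRightDescent m i)
    (h : cs.ChainLE c m) (hy : y ∈ WPar cs T) : cs.ChainLE (c * y) m :=
  wpar_induction_right cs (p := fun y => cs.ChainLE (c * y) m) (by simpa)
    (fun x i hi hx => by simpa [mul_assoc] using (hx.mul_simple i).2 (hm i hi)) hy

theorem ChainLE.mul_left_chainLE_of_mem_wpar {c m x : W} (hm : ∀ i ∈ S, cs.IsLeftDescent m i)
    (h : cs.ChainLE c m) (hx : x ∈ WPar cs S) : cs.ChainLE (x * c) m := by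
  have := h.inv.mul_chainLE_of_mem_wpar (fun i hi => by rw [isRightDescent_inv_iff]; exact hm i hi)
    (inv_mem hx)
  simpa using this.inv

end Parabolic

section DoubleCosets

variable {S T : Set B}

theorem isMinDoubleCosetRep_iff {w r : W} : IsMinDoubleCosetRep cs S T w r ↔
    r ∈ doubleCoset w (WPar cs S) (WPar cs T) ∧
      ∀ v ∈ doubleCoset w (WPar cs S) (WPar cs T), ℓ r ≤ ℓ v := by
  simp only [IsMinDoubleCosetRep, mem_doubleCoset, SetLike.mem_coe]

def IsMaxDoubleCosetRep (S T : Set B) (w m : W) : Prop :=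
  m ∈ doubleCoset w (WPar cs S) (WPar cs T) ∧
    ∀ v ∈ doubleCoset w (WPar cs S) (WPar cs T), ℓ v ≤ ℓ m

variable (S T) in
theorem exists_isMinDoubleCosetRep (w : W) : ∃ r, IsMinDoubleCosetRep cs S T w r := by
  set D := doubleCoset w (WPar cs S) (WPar cs T)
  have hD : D.Nonempty := ⟨w, mem_doubleCoset_self _ _ w⟩
  exact ⟨Function.argminOn cs.length D hD, (isMinDoubleCosetRep_iff cs).mpr
    ⟨Function.argminOn_mem _ _ _, fun v hv => Function.argminOn_le _ _ hv⟩⟩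

theorem mem_wst_iff {u : W} :
    u ∈ WST cs S T ↔ ∀ v ∈ doubleCoset u (WPar cs S) (WPar cs T), ℓ u ≤ ℓ v := by
  rw [WST, Set.mem_ofPred_eq, isMinDoubleCosetRep_iff, and_iff_right (mem_doubleCoset_self _ _ u)]

variable {cs}

theorem doubleCoset_eq_of_isMinDoubleCosetRep {w r : W} (h : IsMinDoubleCosetRep cs S T w r) :
    doubleCoset r (WPar cs S) (WPar cs T) = doubleCoset w (WPar cs S) (WPar cs T) :=
  doubleCoset_eq_of_mem ((isMinDoubleCosetRep_iff cs).mp h).1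

theorem mem_wst_of_isMinDoubleCosetRep {w r : W} (h : IsMinDoubleCosetRep cs S T w r) :
    r ∈ WST cs S T := by
  rw [mem_wst_iff, doubleCoset_eq_of_isMinDoubleCosetRep h]
  exact ((isMinDoubleCosetRep_iff cs).mp h).2

theorem chainLE_of_mem_wst {u v : W} (hu : u ∈ WST cs S T)
    (hv : v ∈ doubleCoset u (WPar cs S) (WPar cs T)) : cs.ChainLE u v := by
  rw [mem_wst_iff] at hu
  obtain ⟨x, hx, y, hy, rfl⟩ := mem_doubleCoset.mp hv
  have hS : ∀ i ∈ S, ¬cs.IsLeftDescent u i := fun i hi =>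
    (hu _ (simple_mul_mem_doubleCoset cs hi u)).not_gt
  have hT : ∀ i ∈ T, ¬cs.IsRightDescent u i := fun i hi =>
    (hu _ (mul_simple_mem_doubleCoset cs hi u)).not_gt
  exact ((ChainLE.refl u).chainLE_mul_left_of_mem_wpar hS hx).chainLE_mul_of_mem_wpar hT hy

theorem eq_of_mem_wst_of_doubleCoset_eq {u v : W} (hu : u ∈ WST cs S T) (hv : v ∈ WST cs S T)
    (h : doubleCoset u (WPar cs S) (WPar cs T) = doubleCoset v (WPar cs S) (WPar cs T)) :
    u = v := by
  have hvu : v ∈ doubleCoset u (WPar cs S) (WPar cs T) := h ▸ mem_doubleCoset_self _ _ v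
  refine (chainLE_of_mem_wst hu hvu).eq_of_length_le ((mem_wst_iff cs).mp hv u ?_)
  exact h.symm ▸ mem_doubleCoset_self _ _ u

theorem IsMaxDoubleCosetRep.chainLE {w c d m : W} (hm : cs.IsMaxDoubleCosetRep S T w m)
    (h : cs.ChainLE c m) (hd : d ∈ doubleCoset c (WPar cs S) (WPar cs T)) : cs.ChainLE d m := by
  obtain ⟨hmw, hmax⟩ := hm
  rw [← doubleCoset_eq_of_mem hmw] at hmax
  obtain ⟨x, hx, y, hy, rfl⟩ := mem_doubleCoset.mp hd
  have hS : ∀ i ∈ S, cs.IsLeftDescent m i := fun i hi =>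
    (hmax _ (simple_mul_mem_doubleCoset cs hi m)).lt_of_ne (cs.length_simple_mul_ne m i)
  have hT : ∀ i ∈ T, cs.IsRightDescent m i := fun i hi =>
    (hmax _ (mul_simple_mem_doubleCoset cs hi m)).lt_of_ne (cs.length_mul_simple_ne m i)
  exact (h.mul_left_chainLE_of_mem_wpar hS hx).mul_chainLE_of_mem_wpar hT hy

end DoubleCosets

section LongestElement

def IsLongestElement (wo : W) : Prop := ∀ v, ℓ v ≤ ℓ wo

theorem chainLE_of_forall_isRightDescent {z : W} (hz : ∀ i, cs.IsRightDescent z i) (v : W) :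
    cs.ChainLE v z := by
  have htop : WPar cs Set.univ = ⊤ := by rw [WPar, Set.image_univ, subgroup_closure_range_simple]
  have := (ChainLE.refl z).mul_chainLE_of_mem_wpar (fun i _ => hz i)
    (htop ▸ Subgroup.mem_top (z⁻¹ * v))
  rwa [mul_inv_cancel_left] at this

namespace IsLongestElement

variable {cs} {wo : W}

theorem isRightDescent (hwo : cs.IsLongestElement wo) (i : B) : cs.IsRightDescent wo i :=
  (hwo _).lt_of_ne (cs.length_mul_simple_ne wo i)

theorem chainLE (hwo : cs.IsLongestElement wo) (v : W) : cs.ChainLE v wo :=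
  chainLE_of_forall_isRightDescent cs hwo.isRightDescent v

theorem inv_eq (hwo : cs.IsLongestElement wo) : wo⁻¹ = wo :=
  (hwo.chainLE wo⁻¹).eq_of_length_le (by rw [length_inv])

theorem mul_self (hwo : cs.IsLongestElement wo) : wo * wo = 1 := by
  nth_rw 1 [← hwo.inv_eq, inv_mul_cancel]

theorem length_add_length_inv_mul (hwo : cs.IsLongestElement wo) (v : W) :
    ℓ v + ℓ (v⁻¹ * wo) = ℓ wo := by
  induction hn : ℓ wo - ℓ v using Nat.strong_induction_on generalizing v with
  | _ n ih =>
  obtain h | h := (hwo v).eq_or_lt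
  · rw [(hwo.chainLE v).eq_of_length_le h.ge, inv_mul_cancel, length_one, add_zero]
  obtain ⟨i, hi⟩ : ∃ i, ¬cs.IsRightDescent v i := by
    by_contra! hall
    exact (chainLE_of_forall_isRightDescent cs hall wo).length_le.not_gt h
  have hvi := cs.not_isRightDescent_iff.mp hi
  have hvsi := ih _ (by omega) (v * s i) rfl
  rw [mul_inv_rev, inv_simple, mul_assoc] at hvsi
  have h₁ := cs.length_simple_mul (v⁻¹ * wo) i
  have h₂ := cs.length_mul_le v (v⁻¹ * wo)
  rw [mul_inv_cancel_left] at h₂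
  omega

theorem length_add_length_mul (hwo : cs.IsLongestElement wo) (v : W) :
    ℓ v + ℓ (v * wo) = ℓ wo := by
  simpa using hwo.length_add_length_inv_mul v⁻¹

theorem chainLE_mul {v w : W} (hwo : cs.IsLongestElement wo) (h : cs.ChainLE v w) :
    cs.ChainLE (w * wo) (v * wo) := by
  induction h with
  | refl => rfl
  | @tail b _ _ hstep ih =>
    obtain ⟨t, ht, rfl, hlt⟩ := hstep
    refine .trans ?_ ih
    have hb := hwo.length_add_length_mul b
    have hbt := hwo.length_add_length_mul (b * t)
    have hprod : b * t * wo * (wo⁻¹ * t * wo) = b * wo := by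
      simp only [mul_assoc, mul_inv_cancel_left]
      rw [← mul_assoc t, ht.mul_self, one_mul]
    have := cs.chainLE_mul_of_length_lt (w := b * t * wo) (t := wo⁻¹ * t * wo)
      (by simpa using ht.conj wo⁻¹) (by rw [hprod]; omega)
    rwa [hprod] at this

variable {S T : Set B} {θ : B → B} {u y : W}

theorem mem_doubleCoset_mul_iff {v : W} (hwo : cs.IsLongestElement wo)
    (hθ : ∀ b, s (θ b) = wo⁻¹ * s b * wo) (hy : y ∈ WPar cs T) :
    v ∈ doubleCoset (u * (y * wo)) (WPar cs S) (WPar cs (θ '' T)) ↔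
      v * wo ∈ doubleCoset u (WPar cs S) (WPar cs T) := by
  rw [wpar_image_eq_map cs hθ, ← mul_assoc, mem_doubleCoset_mul_map_conj_iff, hwo.inv_eq,
    doubleCoset_eq_of_mem (a := u) (mem_doubleCoset.mpr ⟨1, one_mem _, y, hy, by simp⟩)]

theorem isMaxDoubleCosetRep_mul {r : W} (hwo : cs.IsLongestElement wo)
    (hθ : ∀ b, s (θ b) = wo⁻¹ * s b * wo) (hy : y ∈ WPar cs T)
    (hr : IsMinDoubleCosetRep cs S (θ '' T) (u * (y * wo)) r) :
    cs.IsMaxDoubleCosetRep S T u (r * wo) := by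
  rw [isMinDoubleCosetRep_iff] at hr
  refine ⟨(hwo.mem_doubleCoset_mul_iff hθ hy).mp hr.1, fun c hc => ?_⟩
  have hcwo := hr.2 (c * wo) ((hwo.mem_doubleCoset_mul_iff hθ hy).mpr
    (by rwa [mul_assoc, hwo.mul_self, mul_one]))
  have hc := hwo.length_add_length_mul c
  have hr := hwo.length_add_length_mul r
  omega

end IsLongestElement

end LongestElement

end CoxeterSystem

open CoxeterSystem DoubleCoset

/-- The map `Ω : W_{S,T} → W_{S,θ(T)}`, sending `u` to the minimal length representative of
`W(S)·u·w_{o,T}·W(θ(T))`, is a bijection reversing the Bruhat order. -/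
theorem omega_order_reversing_bijection {B W : Type*} [Group W] {M : CoxeterMatrix B}
    (cs : CoxeterSystem M W) (S T : Set B) (wo woT : W) (θ : B → B) (Ω : W → W)
    (hwo : ∀ v : W, cs.length v ≤ cs.length wo)
    (hθ : ∀ b : B, cs.simple (θ b) = wo⁻¹ * cs.simple b * wo)
    (hwoT : (∃ y ∈ WPar cs T, woT = y * wo) ∧
      ∀ v : W, (∃ y ∈ WPar cs T, v = y * wo) → cs.length woT ≤ cs.length v)
    (hΩ : ∀ u ∈ WST cs S T, IsMinDoubleCosetRep cs S (θ '' T) (u * woT) (Ω u)) :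
    Set.BijOn Ω (WST cs S T) (WST cs S (θ '' T)) ∧
      ∀ u ∈ WST cs S T, ∀ u' ∈ WST cs S T,
        BruhatLE cs u u' → BruhatLE cs (Ω u') (Ω u) := by
  obtain ⟨⟨y, hy, rfl⟩, -⟩ := hwoT
  have hwo : cs.IsLongestElement wo := hwo
  have hmax := fun u hu => hwo.isMaxDoubleCosetRep_mul hθ hy (hΩ u hu)
  have hmaps := fun u hu => mem_wst_of_isMinDoubleCosetRep (hΩ u hu)
  refine ⟨⟨hmaps, fun u hu u' hu' heq => ?_, fun v hv => ?_⟩, fun u hu u' hu' hle => ?_⟩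
  · refine eq_of_mem_wst_of_doubleCoset_eq hu hu' ?_
    rw [← doubleCoset_eq_of_mem (hmax u hu).1, heq, doubleCoset_eq_of_mem (hmax u' hu').1]
  · obtain ⟨u, hu⟩ := exists_isMinDoubleCosetRep cs S T (v * wo)
    have hu' := mem_wst_of_isMinDoubleCosetRep hu
    have hvu : v ∈ doubleCoset (u * (y * wo)) (WPar cs S) (WPar cs (θ '' T)) := by
      rw [hwo.mem_doubleCoset_mul_iff hθ hy, doubleCoset_eq_of_isMinDoubleCosetRep hu]
      exact mem_doubleCoset_self _ _ _
    refine ⟨u, hu', eq_of_mem_wst_of_doubleCoset_eq (hmaps u hu') hv ?_⟩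
    rw [doubleCoset_eq_of_isMinDoubleCosetRep (hΩ u hu'), doubleCoset_eq_of_mem hvu]
  · rw [bruhatLE_iff_chainLE] at hle ⊢
    have hle' := (hmax u' hu').chainLE (hle.trans (chainLE_of_mem_wst hu' (hmax u' hu').1))
      (hmax u hu).1
    simpa only [mul_assoc, hwo.mul_self, mul_one] using hwo.chainLE_mul hle'
end

section
/- Let V be a vector space and ω ∈ End(V) a stable operator, i.e. ω restricts to a bijection on im ω and V = ker ω ⊕ im ω. If π is a smooth G-representation on V and ω^∨ is the transpose operator on the smooth dual π^∨, defined by (ω^∨.f)(v) = f(ω.v), then ω^∨ is also stable; moreover im ω^∨ equals the space of smooth linear functionals vanishing on ker ω, and ker ω^∨ equals the space of smooth linear functionals vanishing on im ω. -/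
/-- `v` is a smooth vector: it is fixed by some open compact subgroup of `G`. -/
def IsSmoothVector {G : Type*} [Group G] [TopologicalSpace G] {V : Type*} [AddCommGroup V]
    [Module ℂ V] (ρ : Representation ℂ G V) (v : V) : Prop :=
  ∃ K : Subgroup G, IsOpen (K : Set G) ∧ IsCompact (K : Set G) ∧ ∀ k ∈ K, ρ k v = v

/-- The smooth dual of `(ρ, V)`: linear functionals invariant under some open compact
subgroup of `G` (for the dual action). -/
def smoothDualSet {G : Type*} [Group G] [TopologicalSpace G] {V : Type*} [AddCommGroup V]
    [Module ℂ V] (ρ : Representation ℂ G V) : Set (Module.Dual ℂ V) :=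
  {f | ∃ K : Subgroup G, IsOpen (K : Set G) ∧ IsCompact (K : Set G) ∧
    ∀ k ∈ K, ∀ v : V, f (ρ k v) = f v}

/-!
A stable endomorphism `ω` has a group inverse `σ`, namely `0` on `ker ω` and `ω⁻¹` on `im ω`:
`ωσ = σω`, `ωσω = ω` and `σωσ = σ`. These identities read the same backwards, so they pass to
the transposes. A group inverse commutes with everything that commutes with `ω`, so `σ` is
`G`-equivariant and transposition by `ω`, `σ` and `1 - σω` preserves the smooth dual. On any set
`S` preserved by `a`, `b` and `1 - ab` for a group-inverse pair `(a, b)`, the idempotent `ab`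
splits `S` into its part killed by `a` and `a(S)`, on which `a` is bijective.
-/

open Set LinearMap

structure IsGroupInverse {M : Type*} [Monoid M] (a b : M) : Prop where
  commute : Commute a b
  mul_inv_mul : a * b * a = a
  inv_mul_inv : b * a * b = b

namespace IsGroupInverse

theorem commute_of_commute {M : Type*} [Monoid M] {a b t : M} (h : IsGroupInverse a b)
    (ht : Commute t a) : Commute t b := by
  obtain ⟨hc, h1, h2⟩ := h
  have hb1 : a * b * b = b := by rw [hc.eq, h2]
  have hb2 : b * b * a = b := by rw [mul_assoc, ← hc.eq, ← mul_assoc, h2]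
  have hl : t * b = a * b * t * b := calc
    t * b = t * (a * b * b) := by rw [hb1]
    _ = a * b * a * t * (b * b) := by rw [h1, ← ht.eq]; simp only [mul_assoc]
    _ = a * b * t * (a * b * b) := by simp only [mul_assoc, ht.left_comm]
    _ = a * b * t * b := by rw [hb1]
  have hr : b * t = a * b * t * b := calc
    b * t = b * b * a * t := by rw [hb2]
    _ = b * b * t * (a * b * a) := by rw [h1]; simp only [mul_assoc, ht.eq]
    _ = b * b * a * t * (b * a) := by simp only [mul_assoc, ht.left_comm]
    _ = b * t * (a * b) := by rw [hb2, hc.eq]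
    _ = a * b * t * b := by simp only [mul_assoc, ht.left_comm, hc.left_comm]
  exact hl.trans hr.symm

theorem dualMap {R V : Type*} [CommSemiring R] [AddCommMonoid V] [Module R V]
    {a b : Module.End R V} (h : IsGroupInverse a b) :
    IsGroupInverse (M := Module.End R (Module.Dual R V)) a.dualMap b.dualMap where
  commute := congrArg LinearMap.dualMap h.commute.eq.symm
  mul_inv_mul := congrArg LinearMap.dualMap h.mul_inv_mul
  inv_mul_inv := congrArg LinearMap.dualMap h.inv_mul_inv

section Invariant

variable {R W : Type*} [Semiring R] [AddCommMonoid W] [Module R W] {a b : Module.End R W}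
  {S : Set W}

theorem apply_comm (h : IsGroupInverse a b) (x : W) : a (b x) = b (a x) :=
  LinearMap.congr_fun h.commute.eq x

theorem apply_inv_apply (h : IsGroupInverse a b) (x : W) : a (b (a x)) = a x :=
  LinearMap.congr_fun h.mul_inv_mul x

theorem image_eq (h : IsGroupInverse a b) (ha : MapsTo a S S) (hb : MapsTo b S S) :
    a '' S = {x ∈ S | a (b x) = x} := by
  ext x
  constructor
  · rintro ⟨y, hy, rfl⟩
    exact ⟨ha hy, h.apply_inv_apply y⟩
  · rintro ⟨hx, hbx⟩
    exact ⟨b x, hb hx, hbx⟩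

theorem bijOn_image (h : IsGroupInverse a b) (ha : MapsTo a S S) (hb : MapsTo b S S) :
    BijOn a (a '' S) (a '' S) := by
  refine ⟨?_, ?_, ?_⟩
  · rintro _ ⟨x, hx, rfl⟩
    exact mem_image_of_mem a (ha hx)
  · rintro _ ⟨x, -, rfl⟩ _ ⟨y, -, rfl⟩ hxy
    rw [← h.apply_inv_apply x, ← h.apply_inv_apply y, h.apply_comm, h.apply_comm, hxy]
  · rintro _ ⟨x, hx, rfl⟩
    exact ⟨a (b x), mem_image_of_mem a (hb hx), by rw [h.apply_comm, h.apply_inv_apply]⟩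

end Invariant

theorem existsUnique_add {R W : Type*} [Semiring R] [AddCommGroup W] [Module R W]
    {a b : Module.End R W} {S : Set W} (h : IsGroupInverse a b) (hb : MapsTo b S S)
    (hc : MapsTo ⇑(1 - a * b : Module.End R W) S S) {x : W} (hx : x ∈ S) :
    ∃! p : W × W, p.1 ∈ S ∧ a p.1 = 0 ∧ p.2 ∈ a '' S ∧ x = p.1 + p.2 := by
  refine ⟨(x - a (b x), a (b x)),
    ⟨by simpa using hc hx, ?_, mem_image_of_mem a (hb hx), by simp⟩, ?_⟩
  · rw [map_sub, h.apply_comm, h.apply_inv_apply, sub_self]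
  · rintro ⟨y, _⟩ ⟨-, hy : a y = 0, ⟨z, -, rfl⟩, rfl⟩
    have hproj : a (b (y + a z)) = a z := by
      rw [map_add, map_add, h.apply_comm y, hy, map_zero, zero_add, h.apply_inv_apply]
    rw [hproj, add_sub_cancel_right]

end IsGroupInverse

theorem LinearMap.exists_isGroupInverse_of_isCompl {R V : Type*} [Ring R] [AddCommGroup V]
    [Module R V] {ω : Module.End R V} (hcompl : IsCompl (ker ω) (range ω))
    (hbij : BijOn ω (range ω) (range ω)) : ∃ σ : Module.End R V, IsGroupInverse ω σ := by
  let e : range ω ≃ₗ[R] range ω :=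
    LinearEquiv.ofBijective (ω.restrict fun x _ => mem_range_self ω x)
      ⟨fun x y hxy => Subtype.ext (hbij.injOn x.2 y.2 (congrArg Subtype.val hxy)),
        fun y => let ⟨x, hx, hxy⟩ := hbij.surjOn y.2; ⟨⟨x, hx⟩, Subtype.ext hxy⟩⟩
  let σ : Module.End R V := ofIsCompl hcompl 0 ((range ω).subtype ∘ₗ e.symm.toLinearMap)
  have hσ_ker (x : ker ω) : σ x = 0 := ofIsCompl_apply_left hcompl x
  have hωσ (y : range ω) : ω (σ y) = y := by
    simp only [σ, ofIsCompl_apply_right]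
    exact congrArg Subtype.val (e.apply_symm_apply y)
  have hσω (y : range ω) : σ (ω y) = y := by
    change σ (e y) = y
    simp only [σ, ofIsCompl_apply_right, coe_comp, Function.comp_apply, LinearEquiv.coe_coe,
      LinearEquiv.symm_apply_apply, Submodule.coe_subtype]
  have ext_ker_range {f g : Module.End R V} (hk : ∀ x : ker ω, f x = g x)
      (hr : ∀ y : range ω, f y = g y) : f = g :=
    ext_on_codisjoint hcompl.codisjoint (fun x hx => hk ⟨x, hx⟩) (fun y hy => hr ⟨y, hy⟩)
  refine ⟨σ, ⟨?_, ?_, ?_⟩⟩ <;> refine ext_ker_range (fun x => ?_) (fun y => ?_) <;>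
    simp [hσ_ker, hωσ, hσω]

theorem IsGroupInverse.image_dualMap_eq {R V : Type*} [CommRing R] [AddCommGroup V] [Module R V]
    {ω σ : Module.End R V} (h : IsGroupInverse ω σ) {S : Set (Module.Dual R V)}
    (hω : MapsTo ω.dualMap S S) (hσ : MapsTo σ.dualMap S S) :
    ω.dualMap '' S = {f ∈ S | ∀ v ∈ ker ω, f v = 0} := by
  rw [h.dualMap.image_eq hω hσ]
  ext f
  refine and_congr_right fun _ => ⟨fun hf v hv => ?_, fun hf => ?_⟩
  · rw [← hf, dualMap_apply, dualMap_apply, mem_ker.mp hv, map_zero, map_zero]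
  · have hproj (v : V) : v - σ (ω v) ∈ ker ω := by
      rw [mem_ker, map_sub, sub_eq_zero]
      exact (h.apply_inv_apply v).symm
    ext v
    exact (sub_eq_zero.mp ((map_sub f _ _).symm.trans (hf _ (hproj v)))).symm

theorem mapsTo_dualMap_smoothDualSet {G V : Type*} [Group G] [TopologicalSpace G]
    [AddCommGroup V] [Module ℂ V] {ρ : Representation ℂ G V} {T : Module.End ℂ V}
    (hT : T ∈ Subalgebra.centralizer ℂ (range ρ)) :
    MapsTo T.dualMap (smoothDualSet ρ) (smoothDualSet ρ) := by
  rintro f ⟨K, hKo, hKc, hK⟩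
  refine ⟨K, hKo, hKc, fun k hk v => ?_⟩
  rw [dualMap_apply, dualMap_apply, ← Module.End.mul_apply, ← hT _ (mem_range_self k),
    Module.End.mul_apply, hK k hk]

theorem dual_stable_of_stable_general {G : Type*} [Group G] [TopologicalSpace G]
    {V : Type*} [AddCommGroup V] [Module ℂ V] (ρ : Representation ℂ G V)
    (ω : V →ₗ[ℂ] V)
    (hequiv : ∀ (g : G) (v : V), ω (ρ g v) = ρ g (ω v))
    (hcompl : IsCompl (LinearMap.ker ω) (LinearMap.range ω))
    (hbij : Set.BijOn ω (LinearMap.range ω : Set V) (LinearMap.range ω : Set V)) :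
    (ω.dualMap '' smoothDualSet ρ =
      {f ∈ smoothDualSet ρ | ∀ v ∈ LinearMap.ker ω, f v = 0}) ∧
    ({f ∈ smoothDualSet ρ | ω.dualMap f = 0} =
      {f ∈ smoothDualSet ρ | ∀ v ∈ LinearMap.range ω, f v = 0}) ∧
    Set.BijOn ω.dualMap (ω.dualMap '' smoothDualSet ρ) (ω.dualMap '' smoothDualSet ρ) ∧
    (∀ f ∈ smoothDualSet ρ, ∃! p : Module.Dual ℂ V × Module.Dual ℂ V,
      p.1 ∈ smoothDualSet ρ ∧ ω.dualMap p.1 = 0 ∧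
      p.2 ∈ ω.dualMap '' smoothDualSet ρ ∧ f = p.1 + p.2) := by
  obtain ⟨σ, hσ⟩ := exists_isGroupInverse_of_isCompl hcompl hbij
  have hω_equiv : ω ∈ Subalgebra.centralizer ℂ (range ρ) := by
    rintro _ ⟨g, rfl⟩
    exact LinearMap.ext fun v => (hequiv g v).symm
  have hσ_equiv : σ ∈ Subalgebra.centralizer ℂ (range ρ) := fun g hg =>
    (hσ.commute_of_commute (hω_equiv g hg)).eq
  have hSω := mapsTo_dualMap_smoothDualSet hω_equiv
  have hSσ := mapsTo_dualMap_smoothDualSet hσ_equiv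
  have hS_proj : MapsTo ⇑(1 - ω.dualMap * σ.dualMap : Module.End ℂ (Module.Dual ℂ V))
      (smoothDualSet ρ) (smoothDualSet ρ) := by
    convert mapsTo_dualMap_smoothDualSet
      (sub_mem (one_mem _) (mul_mem hσ_equiv hω_equiv)) using 2
    ext; simp
  refine ⟨hσ.image_dualMap_eq hSω hSσ, ?_, hσ.dualMap.bijOn_image hSω hSσ,
    fun f hf => hσ.dualMap.existsUnique_add hSσ hS_proj hf⟩
  ext f
  simp [LinearMap.ext_iff]

/-- Let `π = (ρ, V)` be a smooth representation of an l-group `G` and `ω` a stable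
`G`-endomorphism of `V` (i.e. `V = ker ω ⊕ im ω` with `ω` bijective on `im ω`).  Then the
transpose `ω^∨` on the smooth dual is also stable; moreover the image of `ω^∨` equals the
smooth functionals vanishing on `ker ω`, and the kernel of `ω^∨` equals the smooth
functionals vanishing on `im ω`. -/
theorem dual_stable_of_stable {G : Type*} [Group G] [TopologicalSpace G] [IsTopologicalGroup G]
    {V : Type*} [AddCommGroup V] [Module ℂ V] (ρ : Representation ℂ G V)
    (hsmooth : ∀ v : V, IsSmoothVector ρ v)
    (ω : V →ₗ[ℂ] V)
    (hequiv : ∀ (g : G) (v : V), ω (ρ g v) = ρ g (ω v))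
    (hcompl : IsCompl (LinearMap.ker ω) (LinearMap.range ω))
    (hbij : Set.BijOn ω (LinearMap.range ω : Set V) (LinearMap.range ω : Set V)) :
    (ω.dualMap '' smoothDualSet ρ =
      {f ∈ smoothDualSet ρ | ∀ v ∈ LinearMap.ker ω, f v = 0}) ∧
    ({f ∈ smoothDualSet ρ | ω.dualMap f = 0} =
      {f ∈ smoothDualSet ρ | ∀ v ∈ LinearMap.range ω, f v = 0}) ∧
    Set.BijOn ω.dualMap (ω.dualMap '' smoothDualSet ρ) (ω.dualMap '' smoothDualSet ρ) ∧
    (∀ f ∈ smoothDualSet ρ, ∃! p : Module.Dual ℂ V × Module.Dual ℂ V,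
      p.1 ∈ smoothDualSet ρ ∧ ω.dualMap p.1 = 0 ∧
      p.2 ∈ ω.dualMap '' smoothDualSet ρ ∧ f = p.1 + p.2) :=
  dual_stable_of_stable_general ρ ω hequiv hcompl hbij
end
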